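/- arXiv:2008.12499 — 2 statements merged into one kernel-verified Lean document; each statement's English description precedes it below -/
import Mathlib

section
/- The equilibria of the ODE dV/dt = (σ/(2C))(V - (β/2)V³) - (k_v k_i/(2C))(C_α P/V + S_α Q/V + C_β V) with V > 0 are exactly V = k_v · sqrt( (σ_β ± sqrt(σ_β² - 6α(k_i/k_v)(C_α P + S_α Q)))/(3α) ), where β = 3α/(k_v² σ) and σ_β = σ - k_v k_i C_β. -/
/-!
Multiplying the equilibrium equation by `V` turns it into a quadratic equation in
`u = (V / k_v)²`, namely `(3α/2) u² - σ_β u + (k_i/k_v)(C_α P + S_α Q) = 0`, whose discriminant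
is exactly `σ_β² - 6α(k_i/k_v)(C_α P + S_α Q)`. For `V, k_v > 0` the substitution is undone
by `V = k_v √u`.
-/

lemma eq_mul_sqrt_iff_div_sq_eq {V k u : ℝ} (hV : 0 < V) (hk : 0 < k) :
    V = k * √u ↔ (V / k) ^ 2 = u := by
  have hVk : 0 < V / k := div_pos hV hk
  constructor
  · intro h
    have hu : 0 < u := by
      rw [h] at hV
      exact Real.sqrt_pos.mp (pos_of_mul_pos_right hV hk.le)
    rw [h, mul_div_cancel_left₀ _ hk.ne', Real.sq_sqrt hu.le]
  · rintro rfl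
    rw [Real.sqrt_sq hVk.le, mul_div_cancel₀ _ hk.ne']

lemma quadratic_eq_zero_iff_of_reduced_discrim {K : Type*} [Field K] [NeZero (2 : K)]
    {a b c s : K} (ha : a ≠ 0) (hs : b ^ 2 - 2 * a * c = s * s) (x : K) :
    a / 2 * (x * x) + -b * x + c = 0 ↔ x = (b + s) / a ∨ x = (b - s) / a := by
  have hdiscrim : discrim (a / 2) (-b) c = s * s := by
    rw [discrim, ← hs]
    field_simp
    ring
  rw [quadratic_eq_zero_iff (div_ne_zero ha (NeZero.ne 2)) hdiscrim, neg_neg,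
    mul_div_cancel₀ _ (NeZero.ne 2)]

variable {σ α C kv ki Cα Cβ Sα P Q : ℝ}

lemma voc_drift_eq_mul_quadratic (hσ : σ ≠ 0) (hkv : kv ≠ 0) {V : ℝ} (hV : V ≠ 0) :
    σ / (2 * C) * (V - 3 * α / (kv ^ 2 * σ) / 2 * V ^ 3)
        - kv * ki / (2 * C) * (Cα * P / V + Sα * Q / V + Cβ * V)
      = -(kv ^ 2 / (2 * C * V)) *
        (3 * α / 2 * ((V / kv) ^ 2 * (V / kv) ^ 2) + -(σ - kv * ki * Cβ) * (V / kv) ^ 2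
          + ki / kv * (Cα * P + Sα * Q)) := by
  field_simp
  ring

theorem voc_equilibria_characterization_general
    (σ α C kv ki Cα Cβ Sα P Q : ℝ)
    (hσ : 0 < σ) (hα : 0 < α) (hC : 0 < C) (hkv : 0 < kv)
    (β : ℝ) (hβ : β = 3 * α / (kv ^ 2 * σ))
    (σβ : ℝ) (hσβdef : σβ = σ - kv * ki * Cβ)
    (hdisc : 0 ≤ σβ ^ 2 - 6 * α * (ki / kv) * (Cα * P + Sα * Q)) :
    ∀ V : ℝ,
      (0 < V ∧
        σ / (2 * C) * (V - β / 2 * V ^ 3)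
          - kv * ki / (2 * C) * (Cα * P / V + Sα * Q / V + Cβ * V) = 0)
      ↔ (0 < V ∧
        (V = kv * Real.sqrt ((σβ +
            Real.sqrt (σβ ^ 2 - 6 * α * (ki / kv) * (Cα * P + Sα * Q))) / (3 * α))
        ∨ V = kv * Real.sqrt ((σβ -
            Real.sqrt (σβ ^ 2 - 6 * α * (ki / kv) * (Cα * P + Sα * Q))) / (3 * α)))) := by
  intro V
  refine and_congr_right fun hV => ?_
  have hs : σβ ^ 2 - 2 * (3 * α) * (ki / kv * (Cα * P + Sα * Q))
      = √(σβ ^ 2 - 6 * α * (ki / kv) * (Cα * P + Sα * Q))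
        * √(σβ ^ 2 - 6 * α * (ki / kv) * (Cα * P + Sα * Q)) := by
    rw [Real.mul_self_sqrt hdisc]
    ring
  rw [hβ, voc_drift_eq_mul_quadratic hσ.ne' hkv.ne' hV.ne', ← hσβdef,
    mul_eq_zero, or_iff_right (neg_ne_zero.mpr (by positivity)),
    quadratic_eq_zero_iff_of_reduced_discrim (by positivity) hs,
    eq_mul_sqrt_iff_div_sq_eq hV hkv, eq_mul_sqrt_iff_div_sq_eq hV hkv]

/-- The positive equilibria of the averaged VOC voltage ODE are exactly
the two closed-form roots. -/
theorem voc_equilibria_characterization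
    (σ α C kv ki Cα Cβ Sα P Q : ℝ)
    (hσ : 0 < σ) (hα : 0 < α) (hC : 0 < C) (hkv : 0 < kv) (hki : 0 < ki)
    (β : ℝ) (hβ : β = 3 * α / (kv ^ 2 * σ))
    (σβ : ℝ) (hσβdef : σβ = σ - kv * ki * Cβ) (hσβ : 0 < σβ)
    (hdisc : 0 ≤ σβ ^ 2 - 6 * α * (ki / kv) * (Cα * P + Sα * Q)) :
    ∀ V : ℝ,
      (0 < V ∧
        σ / (2 * C) * (V - β / 2 * V ^ 3)
          - kv * ki / (2 * C) * (Cα * P / V + Sα * Q / V + Cβ * V) = 0)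
      ↔ (0 < V ∧
        (V = kv * Real.sqrt ((σβ +
            Real.sqrt (σβ ^ 2 - 6 * α * (ki / kv) * (Cα * P + Sα * Q))) / (3 * α))
        ∨ V = kv * Real.sqrt ((σβ -
            Real.sqrt (σβ ^ 2 - 6 * α * (ki / kv) * (Cα * P + Sα * Q))) / (3 * α)))) :=
  voc_equilibria_characterization_general σ α C kv ki Cα Cβ Sα P Q hσ hα hC hkv β hβ σβ hσβdef hdisc
end

section
/- If 0 ≤ S < S_cr := σ_β²/(6α(k_i/k_v)) then the high-voltage equilibrium V_eq = k_v·sqrt((σ_β + sqrt(σ_β² − 6α(k_i/k_v)S))/(3α)) satisfies V_cr < V_eq ≤ V_oc, where V_cr = k_v·sqrt(σ_β/(3α)) and V_oc = k_v·sqrt(2σ_β/(3α)), with equality V_eq = V_oc iff S = 0. -/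
/-!
Put `c = 6α(kᵢ/k_v)` and `r = √(σβ² − cS)`. The hypotheses `0 ≤ S < σβ²/c` force `c > 0`,
hence `0 < r ≤ σβ`, with `r = σβ` exactly when `S = 0`. The voltages `V_cr`, `V_eq`, `V_oc` are
the values at `σβ < σβ + r ≤ 2σβ` of the strictly increasing map `t ↦ k_v √(t / (3α))`.
-/

open Real Set

section
variable {σ c S : ℝ}

lemma pos_of_nonneg_of_lt_sq_div (hS : 0 ≤ S) (h : S < σ ^ 2 / c) : 0 < c := by
  by_contra! hc
  exact (hS.trans_lt h).not_ge (div_nonpos_of_nonneg_of_nonpos (sq_nonneg σ) hc)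

lemma sqrt_sq_sub_mul_pos (hS : 0 ≤ S) (h : S < σ ^ 2 / c) : 0 < √(σ ^ 2 - c * S) :=
  sqrt_pos.mpr (sub_pos.mpr ((lt_div_iff₀' (pos_of_nonneg_of_lt_sq_div hS h)).mp h))

lemma sqrt_sq_sub_mul_le (hσ : 0 ≤ σ) (hc : 0 ≤ c) (hS : 0 ≤ S) : √(σ ^ 2 - c * S) ≤ σ :=
  (sqrt_le_left hσ).mpr (by nlinarith [mul_nonneg hc hS])

lemma sqrt_sq_sub_mul_eq_iff (hσ : 0 ≤ σ) (hc : c ≠ 0) (hD : 0 ≤ σ ^ 2 - c * S) :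
    √(σ ^ 2 - c * S) = σ ↔ S = 0 := by
  rw [sqrt_eq_iff_eq_sq hD hσ, sub_eq_self, mul_eq_zero, or_iff_right hc]

end

lemma strictMonoOn_mul_sqrt_div {k a : ℝ} (hk : 0 < k) (ha : 0 < a) :
    StrictMonoOn (fun t ↦ k * √(t / a)) (Ici 0) := fun _ hx _ _ hxy ↦
  mul_lt_mul_of_pos_left (sqrt_lt_sqrt (div_nonneg hx ha.le) (div_lt_div_of_pos_right hxy ha)) hk

theorem voc_high_voltage_between_cr_and_oc_general
    (α ki kv σβ S : ℝ)
    (hα : 0 < α) (hkv : 0 < kv) (hσβ : 0 < σβ)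
    (hS0 : 0 ≤ S) (hScr : S < σβ ^ 2 / (6 * α * (ki / kv))) :
    kv * Real.sqrt (σβ / (3 * α)) <
      kv * Real.sqrt ((σβ + Real.sqrt (σβ ^ 2 - 6 * α * (ki / kv) * S)) / (3 * α)) ∧
    kv * Real.sqrt ((σβ + Real.sqrt (σβ ^ 2 - 6 * α * (ki / kv) * S)) / (3 * α)) ≤
      kv * Real.sqrt (2 * σβ / (3 * α)) ∧
    (kv * Real.sqrt ((σβ + Real.sqrt (σβ ^ 2 - 6 * α * (ki / kv) * S)) / (3 * α))
        = kv * Real.sqrt (2 * σβ / (3 * α)) ↔ S = 0) := by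
  have hc := pos_of_nonneg_of_lt_sq_div hS0 hScr
  have hr_pos := sqrt_sq_sub_mul_pos hS0 hScr
  have hr_le := sqrt_sq_sub_mul_le hσβ.le hc.le hS0
  have hr_eq := sqrt_sq_sub_mul_eq_iff hσβ.le hc.ne' (sqrt_pos.mp hr_pos).le
  have hV := strictMonoOn_mul_sqrt_div hkv (by positivity : 0 < 3 * α)
  have hσβ_mem : σβ ∈ Ici (0 : ℝ) := hσβ.le
  have hVeq_mem : σβ + √(σβ ^ 2 - 6 * α * (ki / kv) * S) ∈ Ici (0 : ℝ) :=
    (add_pos hσβ hr_pos).le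
  have hVoc_mem : σβ + σβ ∈ Ici (0 : ℝ) := (add_pos hσβ hσβ).le
  rw [two_mul]
  exact ⟨hV hσβ_mem hVeq_mem (by linarith), hV.monotoneOn hVeq_mem hVoc_mem (by linarith),
    (hV.injOn.eq_iff hVeq_mem hVoc_mem).trans ((add_right_inj σβ).trans hr_eq)⟩

/-- If 0 ≤ S < S_cr := σβ²/(6α(kᵢ/k_v)), the high-voltage equilibrium
V_eq = k_v√((σβ + √(σβ² − 6α(kᵢ/k_v)S))/(3α)) satisfies V_cr < V_eq ≤ V_oc, with
V_eq = V_oc iff S = 0, where V_cr = k_v√(σβ/(3α)) and V_oc = k_v√(2σβ/(3α)). -/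
theorem voc_high_voltage_between_cr_and_oc
    (α ki kv σβ S : ℝ)
    (hα : 0 < α) (hki : 0 < ki) (hkv : 0 < kv) (hσβ : 0 < σβ)
    (hS0 : 0 ≤ S) (hScr : S < σβ ^ 2 / (6 * α * (ki / kv))) :
    kv * Real.sqrt (σβ / (3 * α)) <
      kv * Real.sqrt ((σβ + Real.sqrt (σβ ^ 2 - 6 * α * (ki / kv) * S)) / (3 * α)) ∧
    kv * Real.sqrt ((σβ + Real.sqrt (σβ ^ 2 - 6 * α * (ki / kv) * S)) / (3 * α)) ≤
      kv * Real.sqrt (2 * σβ / (3 * α)) ∧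
    (kv * Real.sqrt ((σβ + Real.sqrt (σβ ^ 2 - 6 * α * (ki / kv) * S)) / (3 * α))
        = kv * Real.sqrt (2 * σβ / (3 * α)) ↔ S = 0) :=
  voc_high_voltage_between_cr_and_oc_general α ki kv σβ S hα hkv hσβ hS0 hScr
end
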